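/- arXiv:1909.02813 — 3 statements merged into one kernel-verified Lean document; each statement's English description precedes it below -/
import Mathlib

section
/- Let K be an algebraically closed field and n ≥ 1 a natural number. For t ∈ Kˣ let d_t : Kⁿ → Kⁿ be the linear automorphism d_t(a₁, …, aₙ) = (t·a₁, t²·a₂, …, tⁿ·aₙ). If B is a linear subspace of Kⁿ of codimension one such that B ∩ K·eᵢ = {0} for every standard basis vector eᵢ (i = 1, …, n), then the intersection ⋂_{t ∈ Kˣ} d_t(B) is the zero subspace. -/
/-!
Write `B = ker φ`; the hypothesis on the coordinate lines says exactly that `φ eᵢ ≠ 0` for all `i`.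
If `x` lies in every `d_t(B)`, then `(sⁱ⁺¹ xᵢ)ᵢ ∈ B` for every `s ≠ 0`, so the polynomial
`∑ φ(eᵢ) xᵢ Xⁱ⁺¹` vanishes on `Kˣ` and at `0`, hence identically because `K` is infinite.
Its coefficients `φ(eᵢ) xᵢ` are therefore zero, and so is `x`.
-/

open Polynomial

theorem Submodule.exists_ker_eq_of_finrank_quotient_eq_one {K V : Type*} [Field K]
    [AddCommGroup V] [Module K V] (B : Submodule K V) (hB : Module.finrank K (V ⧸ B) = 1) :
    ∃ φ : V →ₗ[K] K, LinearMap.ker φ = B := by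
  have : Module.Finite K (V ⧸ B) := Module.finite_of_finrank_eq_succ hB
  obtain ⟨e⟩ : Nonempty ((V ⧸ B) ≃ₗ[K] K) :=
    FiniteDimensional.nonempty_linearEquiv_of_finrank_eq (by simp [hB])
  exact ⟨e.toLinearMap ∘ₗ B.mkQ, by rw [LinearEquiv.ker_comp, Submodule.ker_mkQ]⟩

theorem eq_zero_of_forall_sum_mul_pow_succ_eq_zero {R : Type*} [CommRing R] [IsDomain R]
    [Infinite R] {n : ℕ} (c : Fin n → R)
    (h : ∀ s : R, s ≠ 0 → ∑ i, c i * s ^ (i.val + 1) = 0) : c = 0 := by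
  set P : R[X] := ∑ i : Fin n, monomial (i.val + 1) (c i)
  have hP : P = 0 := Polynomial.funext fun s => by
    have hs : P.eval s = ∑ i, c i * s ^ (i.val + 1) := by
      simp [P, eval_finsetSum]
    rcases eq_or_ne s 0 with rfl | hs0
    · simp [hs]
    · simp [hs, h s hs0]
  funext j
  simpa [P, finsetSum_coeff, coeff_monomial, Fin.val_inj] using congrArg (coeff · (j.val + 1)) hP

theorem stmt_0_general {K : Type*} [Field K] [IsAlgClosed K] (n : ℕ)
    (d : Kˣ → ((Fin n → K) →ₗ[K] (Fin n → K)))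
    (hd : ∀ (t : Kˣ) (a : Fin n → K) (i : Fin n), d t a i = (t : K) ^ (i.val + 1) * a i)
    (B : Submodule K (Fin n → K))
    (hB : Module.finrank K ((Fin n → K) ⧸ B) = 1)
    (hBe : ∀ i : Fin n, B ⊓ Submodule.span K {(Pi.single i 1 : Fin n → K)} = ⊥) :
    (⨅ t : Kˣ, B.map (d t)) = ⊥ := by
  obtain ⟨φ, hφ⟩ := B.exists_ker_eq_of_finrank_quotient_eq_one hB
  have hφe : ∀ i, φ (Pi.single i 1) ≠ 0 := fun i hi => by
    have := (Submodule.disjoint_span_singleton.mp (disjoint_iff.mpr (hBe i)))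
      (hφ ▸ LinearMap.mem_ker.mpr hi)
    simpa using congrFun this i
  refine eq_bot_iff.mpr fun x hx => ?_
  -- `x = d_{s⁻¹} b` with `b ∈ ker φ`, i.e. `b i = s ^ (i + 1) * x i`
  have hsum : ∀ s : K, s ≠ 0 → ∑ i, x i * φ (Pi.single i 1) * s ^ (i.val + 1) = 0 := by
    intro s hs
    obtain ⟨b, hb, rfl⟩ := Submodule.mem_iInf _ |>.mp hx (Units.mk0 s hs)⁻¹
    rw [SetLike.mem_coe, ← hφ, LinearMap.mem_ker, LinearMap.pi_apply_eq_sum_univ] at hb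
    rw [← hb]
    refine Finset.sum_congr rfl fun i _ => ?_
    simp only [hd, Units.val_inv_eq_inv_val, Units.val_mk0, inv_pow, smul_eq_mul]
    have hsingle : (fun j => if i = j then (1 : K) else 0) = Pi.single i 1 := by
      ext j; simp [Pi.single_apply, eq_comm]
    rw [hsingle]
    field_simp
  have hcoeff := eq_zero_of_forall_sum_mul_pow_succ_eq_zero _ hsum
  funext i
  exact (mul_eq_zero.mp (congrFun hcoeff i)).resolve_right (hφe i)

/-- Let `K` be an algebraically closed field and `n ≥ 1`. For `t ∈ Kˣ` let
`d t : Kⁿ → Kⁿ` be the linear automorphism `(a₁, …, aₙ) ↦ (t·a₁, t²·a₂, …, tⁿ·aₙ)`.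
If `B` is a linear subspace of `Kⁿ` of codimension one such that `B ∩ K·eᵢ = 0`
for every standard basis vector `eᵢ`, then `⋂_{t ∈ Kˣ} d_t(B) = 0`. -/
theorem stmt_0 {K : Type*} [Field K] [IsAlgClosed K] (n : ℕ) (hn : 1 ≤ n)
    (d : Kˣ → ((Fin n → K) →ₗ[K] (Fin n → K)))
    (hd : ∀ (t : Kˣ) (a : Fin n → K) (i : Fin n), d t a i = (t : K) ^ (i.val + 1) * a i)
    (B : Submodule K (Fin n → K))
    (hB : Module.finrank K ((Fin n → K) ⧸ B) = 1)
    (hBe : ∀ i : Fin n, B ⊓ Submodule.span K {(Pi.single i 1 : Fin n → K)} = ⊥) :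
    (⨅ t : Kˣ, B.map (d t)) = ⊥ :=
  stmt_0_general n d hd B hB hBe
end

section
/- Let K be a field and n a natural number. Let u, v : Fin (n+2) → K^{n+1} be two families of nonzero vectors each in general position, meaning that every subfamily of n+1 of the vectors u i is linearly independent, and likewise for v. Then there exist g ∈ GL_{n+1}(K) and scalars λ : Fin (n+2) → Kˣ such that g (u i) = λ i • (v i) for all i; moreover g is unique up to multiplication by a scalar matrix, i.e. if g' ∈ GL_{n+1}(K) also satisfies g' (u i) ∈ Kˣ • (v i) for all i, then g'⁻¹ g is a scalar multiple of the identity. In particular, PGL_{n+1}(K) acts sharply transitively on projective frames of the projective space P(K^{n+1}), so its action on Pⁿ(K) is generically (n+2)-transitive. -/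
/-!
Any `n + 1` vectors of a frame form a basis, and in the basis formed by the first `n + 1` the
last vector has only nonzero coordinates: a vanishing coordinate would put it in the span of
`n` of the others. Rescaling the basis by these coordinates gives a basis whose sum is the last
vector, so each frame is, up to the scalars, a basis together with the sum of its vectors. The
linear map carrying one such basis to the other carries frame to frame, and any other such map
is forced by the image of the sum to scale all basis vectors by the same factor.
-/

open Module

def InGeneralPosition (K : Type*) {V : Type*} [Field K] [AddCommGroup V] [Module K V] {n : ℕ}
    (w : Fin (n + 2) → V) : Prop :=
  ∀ s : Finset (Fin (n + 2)), s.card = n + 1 → LinearIndependent K (fun i : s => w i)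

namespace InGeneralPosition

variable {K V : Type*} [Field K] [AddCommGroup V] [Module K V] {n : ℕ} {w : Fin (n + 2) → V}

theorem linearIndepOn_compl_singleton (hw : InGeneralPosition K w) (j : Fin (n + 2)) :
    LinearIndepOn K w {j}ᶜ := by
  have h : LinearIndepOn K w ↑(Finset.univ.erase j) := hw _ (by simp)
  simpa [Set.compl_eq_univ_sdiff] using h

theorem linearIndependent_comp_castSucc (hw : InGeneralPosition K w) :
    LinearIndependent K (w ∘ Fin.castSucc) := by
  rw [← linearIndepOn_range_iff (Fin.castSucc_injective _)]
  exact (hw.linearIndepOn_compl_singleton (Fin.last _)).mono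
    (by rintro _ ⟨i, rfl⟩; exact Fin.castSucc_ne_last i)

theorem exists_basis_smul_eq_and_sum_eq (hw : InGeneralPosition K w)
    (hV : finrank K V = n + 1) :
    ∃ (B : Basis (Fin (n + 1)) K V) (a : Fin (n + 1) → Kˣ),
      (∀ i, B i = a i • w i.castSucc) ∧ ∑ i, B i = w (Fin.last (n + 1)) := by
  set B₀ := basisOfLinearIndependentOfCardEqFinrank hw.linearIndependent_comp_castSucc
    (by simp [hV])
  have hB₀ : ⇑B₀ = w ∘ Fin.castSucc := coe_basisOfLinearIndependentOfCardEqFinrank ..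
  have hrepr : ∀ j, B₀.repr (w (Fin.last _)) j ≠ 0 := by
    intro j hj
    have hlast : w (Fin.last _) ∉ Submodule.span K (w '' (Fin.castSucc '' {j}ᶜ)) := by
      refine ((linearIndepOn_insert ?_).1
        ((hw.linearIndepOn_compl_singleton j.castSucc).mono ?_)).2
      · rintro ⟨i, -, hi⟩
        exact Fin.castSucc_ne_last i hi
      · rintro _ (rfl | ⟨i, hi, rfl⟩)
        · exact (Fin.castSucc_ne_last j).symm
        · exact fun h => hi (Fin.castSucc_injective _ h)
    rw [← Set.image_comp, ← hB₀, B₀.mem_span_image] at hlast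
    exact hlast fun i hi => by rintro rfl; exact Finsupp.mem_support_iff.1 hi hj
  let a : Fin (n + 1) → Kˣ := fun i => Units.mk0 _ (hrepr i)
  refine ⟨B₀.unitsSMul a, a, fun i => ?_, ?_⟩
  · simp [Basis.unitsSMul_apply, hB₀]
  · simpa [a, Basis.unitsSMul_apply, Units.smul_def, hB₀] using B₀.sum_repr (w (Fin.last _))

end InGeneralPosition

theorem Module.Basis.eq_smul_equiv_of_map_sum {R ι V W : Type*} [CommSemiring R] [AddCommMonoid V]
    [Module R V] [AddCommMonoid W] [Module R W] [Fintype ι] (B : Basis ι R V) (C : Basis ι R W)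
    {f : V →ₗ[R] W} {d : ι → R} {c : R} (hf : ∀ i, f (B i) = d i • C i)
    (hsum : f (∑ i, B i) = c • ∑ i, C i) :
    f = c • (B.equiv C (Equiv.refl ι) : V →ₗ[R] W) := by
  have hd : d = fun _ => c := C.equivFun.symm.injective <| by
    simpa [Basis.equivFun_symm_apply, map_sum, hf, Finset.smul_sum] using hsum
  exact B.ext fun i => by simp [hf, hd]

theorem stmt_6_general {K : Type*} [Field K] (n : ℕ)
    (u v : Fin (n + 2) → (Fin (n + 1) → K))
    (hu : ∀ s : Finset (Fin (n + 2)), s.card = n + 1 →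
      LinearIndependent K (fun i : s => u i))
    (hv : ∀ s : Finset (Fin (n + 2)), s.card = n + 1 →
      LinearIndependent K (fun i : s => v i)) :
    ∃ g : (Fin (n + 1) → K) ≃ₗ[K] (Fin (n + 1) → K),
      (∃ lam : Fin (n + 2) → Kˣ, ∀ i, g (u i) = (lam i : K) • v i) ∧
      ∀ g' : (Fin (n + 1) → K) ≃ₗ[K] (Fin (n + 1) → K),
        (∀ i, ∃ mu : Kˣ, g' (u i) = (mu : K) • v i) →
        ∃ c : Kˣ, ∀ x, g' x = (c : K) • g x := by
  obtain ⟨Bu, a, hBu, hu_last⟩ := InGeneralPosition.exists_basis_smul_eq_and_sum_eq hu (by simp)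
  obtain ⟨Bv, b, hBv, hv_last⟩ := InGeneralPosition.exists_basis_smul_eq_and_sum_eq hv (by simp)
  have hv_cast : ∀ i, v i.castSucc = (b i)⁻¹ • Bv i := fun i => by rw [hBv, inv_smul_smul]
  let g := Bu.equiv Bv (Equiv.refl _)
  refine ⟨g, ⟨Fin.lastCases 1 fun i => (a i)⁻¹ * b i, fun i => ?_⟩, fun g' hg' => ?_⟩
  · induction i using Fin.lastCases with
    | last => simp [g, ← hu_last, ← hv_last, map_sum]
    | cast i =>
      have hu_cast : u i.castSucc = (a i)⁻¹ • Bu i := by rw [hBu, inv_smul_smul]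
      simp [g, hu_cast, hBv, Units.smul_def, smul_smul]
  · choose μ hμ using hg'
    have hg' : g'.toLinearMap = (μ (Fin.last _) : K) • g.toLinearMap := by
      refine Bu.eq_smul_equiv_of_map_sum Bv (d := fun i => a i * μ i.castSucc * (b i)⁻¹)
        (fun i => ?_) ?_
      · simp [hBu, hμ, hv_cast, Units.smul_def, smul_smul, mul_assoc]
      · rw [hu_last, LinearEquiv.coe_coe, hμ, hv_last]
    exact ⟨μ (Fin.last _), fun x => LinearMap.congr_fun hg' x⟩

/-- Let `K` be a field, and `u v : Fin (n+2) → K^{n+1}` two families of nonzero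
vectors in general position (any `n+1` of them are linearly independent). Then there
is `g ∈ GL_{n+1}(K)` and scalars `λ i ∈ Kˣ` with `g (u i) = λ i • v i` for all `i`;
moreover `g` is unique up to a scalar: any `g'` with `g' (u i) ∈ Kˣ • v i` for all `i`
differs from `g` by a scalar multiple of the identity. In particular `PGL_{n+1}(K)`
acts sharply transitively on projective frames of `Pⁿ(K)`. -/
theorem stmt_6 {K : Type*} [Field K] (n : ℕ)
    (u v : Fin (n + 2) → (Fin (n + 1) → K))
    (hu0 : ∀ i, u i ≠ 0) (hv0 : ∀ i, v i ≠ 0)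
    (hu : ∀ s : Finset (Fin (n + 2)), s.card = n + 1 →
      LinearIndependent K (fun i : s => u i))
    (hv : ∀ s : Finset (Fin (n + 2)), s.card = n + 1 →
      LinearIndependent K (fun i : s => v i)) :
    ∃ g : (Fin (n + 1) → K) ≃ₗ[K] (Fin (n + 1) → K),
      (∃ lam : Fin (n + 2) → Kˣ, ∀ i, g (u i) = (lam i : K) • v i) ∧
      ∀ g' : (Fin (n + 1) → K) ≃ₗ[K] (Fin (n + 1) → K),
        (∀ i, ∃ mu : Kˣ, g' (u i) = (mu : K) • v i) →
        ∃ c : Kˣ, ∀ x, g' x = (c : K) • g x :=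
  stmt_6_general n u v hu hv
end

section
/- There are no infinite sharply 4-transitive groups: if a group G acts on a set X with at least 4 elements in such a way that for any two injective 4-tuples (x₁, x₂, x₃, x₄) and (y₁, y₂, y₃, y₄) of elements of X there is exactly one g ∈ G with g·xᵢ = yᵢ for i = 1, 2, 3, 4, then X is finite. -/
/-- There are no infinite sharply 4-transitive groups: if a group `G` acts on a set
`X` with at least 4 elements so that for any two injective 4-tuples of elements of
`X` there is exactly one `g ∈ G` carrying the first to the second componentwise,
then `X` is finite. -/
theorem stmt_9 {G X : Type*} [Group G] [MulAction G X]
    (h4 : ∃ x : Fin 4 → X, Function.Injective x)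
    (hsharp : ∀ x y : Fin 4 → X, Function.Injective x → Function.Injective y →
      ∃! g : G, ∀ i, g • x i = y i) :
    Finite X := by
  by_contra hfin
  haveI hX : Infinite X := not_finite_iff_infinite.mp hfin
  obtain ⟨x, hx⟩ := h4
  -- two group elements agreeing on an injective 4-tuple are equal
  have agree : ∀ (p : Fin 4 → X), Function.Injective p → ∀ g h : G,
      (∀ i, g • p i = h • p i) → g = h := by
    intro p hp g h hgh
    obtain ⟨u, -, hu⟩ := hsharp p (fun i => h • p i) hp ((MulAction.injective h).comp hp)
    exact (hu g hgh).trans (hu h fun i => rfl).symm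
  -- fixed point set of an element moving some point is finite
  have fixfin : ∀ g : G, (∃ w : X, g • w ≠ w) → {y : X | g • y = y}.Finite := by
    intro g hw
    obtain ⟨w, hw⟩ := hw
    by_contra hinf
    have hinf' : {y : X | g • y = y}.Infinite := hinf
    let e := Set.Infinite.natEmbedding _ hinf'
    have hp : Function.Injective (fun i : Fin 4 => ((e i.val : {y : X | g • y = y}) : X)) :=
      fun i j hij => Fin.val_injective (e.injective (Subtype.coe_injective hij))
    have hg1 := agree _ hp g 1 (fun i => by rw [one_smul]; exact (e i.val).2)
    rw [hg1, one_smul] at hw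
    exact hw rfl
  have inj4 : ∀ (p₀ p₁ p₂ p₃ : X), p₀ ≠ p₁ → p₀ ≠ p₂ → p₀ ≠ p₃ → p₁ ≠ p₂ → p₁ ≠ p₃ →
      p₂ ≠ p₃ → Function.Injective ![p₀, p₁, p₂, p₃] := by
    intro p₀ p₁ p₂ p₃ h01 h02 h03 h12 h13 h23 i j hij
    fin_cases i <;> fin_cases j <;> simp_all
  set a := x 0 with ha
  set b := x 1 with hb
  set c := x 2 with hc
  set d := x 3 with hd
  have hab : a ≠ b := fun h => absurd (hx h) (by decide)
  have hac : a ≠ c := fun h => absurd (hx h) (by decide)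
  have had : a ≠ d := fun h => absurd (hx h) (by decide)
  have hbc : b ≠ c := fun h => absurd (hx h) (by decide)
  have hbd : b ≠ d := fun h => absurd (hx h) (by decide)
  have hcd : c ≠ d := fun h => absurd (hx h) (by decide)
  have hpinj : Function.Injective ![a, b, c, d] := inj4 a b c d hab hac had hbc hbd hcd
  -- t : (a b)(c d)
  obtain ⟨t, ht, -⟩ := hsharp ![a, b, c, d] ![b, a, d, c] hpinj
    (inj4 b a d c hab.symm hbd hbc had hac hcd.symm)
  have hta : t • a = b := by simpa using ht 0
  have htb : t • b = a := by simpa using ht 1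
  have htc : t • c = d := by simpa using ht 2
  have htd : t • d = c := by simpa using ht 3
  -- s : fixes a b, swaps c d
  obtain ⟨s, hs, -⟩ := hsharp ![a, b, c, d] ![a, b, d, c] hpinj
    (inj4 a b d c hab had hac hbd hbc hcd.symm)
  have hsa : s • a = a := by simpa using hs 0
  have hsb : s • b = b := by simpa using hs 1
  have hsc : s • c = d := by simpa using hs 2
  have hsd : s • d = c := by simpa using hs 3
  have t2 : t * t = 1 := by
    apply agree _ hpinj
    intro i
    fin_cases i <;> simp [mul_smul, hta, htb, htc, htd]
  have s2 : s * s = 1 := by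
    apply agree _ hpinj
    intro i
    fin_cases i <;> simp [mul_smul, hsa, hsb, hsc, hsd]
  have comm : t * s = s * t := by
    apply agree _ hpinj
    intro i
    fin_cases i <;> simp [mul_smul, hta, htb, htc, htd, hsa, hsb, hsc, hsd]
  obtain ⟨v, hv⟩ : ∃ v : G, v = t * s := ⟨t * s, rfl⟩
  have hva : v • a = b := by rw [hv, mul_smul, hsa, hta]
  have hvc : v • c = c := by rw [hv, mul_smul, hsc, htd]
  have hvd : v • d = d := by rw [hv, mul_smul, hsd, htc]
  -- point relations
  have htt : ∀ z : X, t • t • z = z := fun z => by rw [← mul_smul, t2, one_smul]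
  have hss : ∀ z : X, s • s • z = z := fun z => by rw [← mul_smul, s2, one_smul]
  have hts : ∀ z : X, t • s • z = v • z := fun z => by rw [← mul_smul, ← hv]
  have hst : ∀ z : X, s • t • z = v • z := fun z => by rw [← mul_smul, ← comm, ← hv]
  have htv : ∀ z : X, t • v • z = s • z := fun z => by
    rw [hv, ← mul_smul, ← mul_assoc, t2, one_mul]
  have hsv : ∀ z : X, s • v • z = t • z := fun z => by
    rw [hv, comm, ← mul_smul, ← mul_assoc, s2, one_mul]
  -- the bad set
  set B := {y : X | t • y = y} ∪ ({y : X | s • y = y} ∪ {y : X | v • y = y}) with hB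
  have hBfin : B.Finite :=
    ((fixfin t ⟨a, by rw [hta]; exact hab.symm⟩).union
      ((fixfin s ⟨c, by rw [hsc]; exact hcd.symm⟩).union
        (fixfin v ⟨a, by rw [hva]; exact hab.symm⟩)))
  have hBc : (Bᶜ : Set X).Infinite := hBfin.infinite_compl
  -- quadruples over free points are injective
  have quadinj : ∀ y : X, y ∈ (Bᶜ : Set X) → Function.Injective ![y, t • y, s • y, v • y] := by
    intro y hy
    simp only [hB, Set.mem_compl_iff, Set.mem_union, Set.mem_setOf_eq, not_or] at hy
    obtain ⟨h1, h2, h3⟩ := hy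
    apply inj4
    · exact fun h => h1 h.symm
    · exact fun h => h2 h.symm
    · exact fun h => h3 h.symm
    · intro h
      exact h3 (by rw [hv, mul_smul, ← h, htt])
    · intro h
      exact h2 (by rw [← htv y, ← h, htt])
    · intro h
      exact h1 (by rw [← hsv y, ← h, hss])
  obtain ⟨x₀, hx₀⟩ := hBc.nonempty
  -- the joint centralizer is infinite
  have hmap : ∀ y : ↥(Bᶜ : Set X), ∃ g : G, (g * t = t * g ∧ g * s = s * g) ∧ g • x₀ = ↑y := by
    intro y
    obtain ⟨g, hg, -⟩ := hsharp ![x₀, t • x₀, s • x₀, v • x₀] ![↑y, t • ↑y, s • ↑y, v • ↑y]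
      (quadinj x₀ hx₀) (quadinj y y.2)
    have hg0 : g • x₀ = ↑y := by simpa using hg 0
    have hg1 : g • t • x₀ = t • (y : X) := by simpa using hg 1
    have hg2 : g • s • x₀ = s • (y : X) := by simpa using hg 2
    have hg3 : g • v • x₀ = v • (y : X) := by simpa using hg 3
    refine ⟨g, ⟨?_, ?_⟩, hg0⟩
    · apply agree _ (quadinj x₀ hx₀)
      intro i
      fin_cases i
      · show (g * t) • x₀ = (t * g) • x₀
        rw [mul_smul, mul_smul, hg1, hg0]
      · show (g * t) • (t • x₀) = (t * g) • (t • x₀)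
        rw [mul_smul, mul_smul, htt, hg0, hg1, htt]
      · show (g * t) • (s • x₀) = (t * g) • (s • x₀)
        rw [mul_smul, mul_smul, hts, hg3, hg2, hts]
      · show (g * t) • (v • x₀) = (t * g) • (v • x₀)
        rw [mul_smul, mul_smul, htv, hg2, hg3, htv]
    · apply agree _ (quadinj x₀ hx₀)
      intro i
      fin_cases i
      · show (g * s) • x₀ = (s * g) • x₀
        rw [mul_smul, mul_smul, hg2, hg0]
      · show (g * s) • (t • x₀) = (s * g) • (t • x₀)
        rw [mul_smul, mul_smul, hst, hg3, hg1, hst]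
      · show (g * s) • (s • x₀) = (s * g) • (s • x₀)
        rw [mul_smul, mul_smul, hss, hg0, hg2, hss]
      · show (g * s) • (v • x₀) = (s * g) • (v • x₀)
        rw [mul_smul, mul_smul, hsv, hg1, hg3, hsv]
  choose φ hφ using hmap
  haveI hBcInf : Infinite ↥(Bᶜ : Set X) := hBc.to_subtype
  haveI hCinf : Infinite {g : G // g * t = t * g ∧ g * s = s * g} := by
    refine Infinite.of_injective
      (fun y : ↥(Bᶜ : Set X) => (⟨φ y, (hφ y).1⟩ : {g : G // g * t = t * g ∧ g * s = s * g}))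
      (fun y y' h => ?_)
    have hval : φ y = φ y' := congrArg Subtype.val h
    exact Subtype.ext (by rw [← (hφ y).2, ← (hφ y').2, hval])
  -- the joint centralizer is finite
  set F := {y : X | s • y = y} ∪ {y : X | v • y = y} with hF
  have hFfin : F.Finite :=
    (fixfin s ⟨c, by rw [hsc]; exact hcd.symm⟩).union (fixfin v ⟨a, by rw [hva]; exact hab.symm⟩)
  haveI := hFfin.to_subtype
  have haF : a ∈ F := Or.inl hsa
  have hbF : b ∈ F := Or.inl hsb
  have hcF : c ∈ F := Or.inr hvc
  have hdF : d ∈ F := Or.inr hvd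
  have hpres : ∀ g : {g : G // g * t = t * g ∧ g * s = s * g}, ∀ y : X, y ∈ F → (g : G) • y ∈ F := by
    rintro ⟨g, hgt, hgs⟩ y hy
    have hgv : g * v = v * g := by
      rw [hv]
      exact Commute.mul_right hgt hgs
    rcases hy with hy | hy
    · have hy' : s • y = y := hy
      refine Or.inl (show s • (g • y) = g • y from ?_)
      rw [← mul_smul, ← hgs, mul_smul, hy']
    · have hy' : v • y = y := hy
      refine Or.inr (show v • (g • y) = g • y from ?_)
      rw [← mul_smul, ← hgv, mul_smul, hy']
  haveI hCfin : Finite {g : G // g * t = t * g ∧ g * s = s * g} := by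
    refine Finite.of_injective
      (fun g : {g : G // g * t = t * g ∧ g * s = s * g} =>
        (fun y : ↥F => (⟨(g : G) • ↑y, hpres g ↑y y.2⟩ : ↥F)))
      (fun g g' h => ?_)
    have key : ∀ y : X, ∀ hy : y ∈ F, (g : G) • y = (g' : G) • y := fun y hy =>
      congrArg Subtype.val (congrFun h ⟨y, hy⟩)
    apply Subtype.ext
    apply agree _ hpinj
    intro i
    fin_cases i
    · exact key a haF
    · exact key b hbF
    · exact key c hcF
    · exact key d hdF
  exact not_finite {g : G // g * t = t * g ∧ g * s = s * g}
end
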